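/- With the same definitions of bosonic creation and annihilation operators on the occupation-number free module, the canonical commutation relation holds: a_α a_β† − a_β† a_α = δ_{αβ} · id. -/

import Mathlib

noncomputable def annih {I : Type*} (α : I) :
    ((I →₀ ℕ) →₀ ℂ) →ₗ[ℂ] ((I →₀ ℕ) →₀ ℂ) :=
  Finsupp.lsum ℂ fun f =>
    ((Real.sqrt (f α) : ℂ)) • Finsupp.lsingle (f - Finsupp.single α 1)

noncomputable def creat {I : Type*} (α : I) :
    ((I →₀ ℕ) →₀ ℂ) →ₗ[ℂ] ((I →₀ ℕ) →₀ ℂ) :=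
  Finsupp.lsum ℂ fun f =>
    ((Real.sqrt (f α + 1) : ℂ)) • Finsupp.lsingle (f + Finsupp.single α 1)

/- Every occupation vector `e_f` is an eigenvector of `a_α a_α†` and of `a_α† a_α`, with
eigenvalues `f α + 1` and `f α`, since `√n · √n = n`. For `α ≠ β` the two orders of applying
`a_α` and `a_β†` lead to the same occupation vector with the same coefficient
`√(f α) · √(f β + 1)`, because removing a particle in mode `α` and adding one in mode `β`
commute (also when `f α = 0`, where truncated subtraction removes nothing but the
coefficient `√0` vanishes). -/

lemma Complex.ofReal_sqrt_mul_self {x : ℝ} (hx : 0 ≤ x) : (√x : ℂ) * √x = x := by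
  rw [← Complex.ofReal_mul, Real.mul_self_sqrt hx]

lemma Finsupp.add_single_tsub_single_of_ne {I : Type*} {α β : I} (h : α ≠ β)
    (f : I →₀ ℕ) (m n : ℕ) :
    f + Finsupp.single β m - Finsupp.single α n = f - Finsupp.single α n + Finsupp.single β m := by
  ext γ
  rcases eq_or_ne γ α with rfl | hγ
  · simp [Finsupp.single_eq_of_ne h]
  · simp [Finsupp.single_eq_of_ne hγ]

section

variable {I : Type*} (α : I) (f : I →₀ ℕ) (b : ℂ)

lemma annih_single :
    annih α (Finsupp.single f b)
      = (√(f α : ℝ) : ℂ) • Finsupp.single (f - Finsupp.single α 1) b := by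
  simp [annih]

lemma creat_single :
    creat α (Finsupp.single f b)
      = (√(f α + 1 : ℝ) : ℂ) • Finsupp.single (f + Finsupp.single α 1) b := by
  simp [creat]

lemma annih_creat_single :
    annih α (creat α (Finsupp.single f b)) = ((f α : ℂ) + 1) • Finsupp.single f b := by
  rw [creat_single, map_smul, annih_single, smul_smul, add_tsub_cancel_right]
  simp only [Finsupp.add_apply, Finsupp.single_eq_same, Nat.cast_add, Nat.cast_one]
  rw [Complex.ofReal_sqrt_mul_self (by positivity)]
  push_cast
  rfl

lemma creat_annih_single :
    creat α (annih α (Finsupp.single f b)) = (f α : ℂ) • Finsupp.single f b := by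
  rcases Nat.eq_zero_or_pos (f α) with hzero | hpos
  · simp [annih_single, hzero]
  have hle : Finsupp.single α 1 ≤ f := Finsupp.single_le_iff.mpr hpos
  rw [annih_single, map_smul, creat_single, smul_smul, tsub_add_cancel_of_le hle,
    Finsupp.tsub_apply, Finsupp.single_eq_same, Nat.cast_sub hpos, Nat.cast_one, sub_add_cancel,
    Complex.ofReal_sqrt_mul_self (by positivity)]
  rfl

end

lemma annih_comp_creat_of_ne {I : Type*} {α β : I} (h : α ≠ β) :
    annih α ∘ₗ creat β = creat β ∘ₗ annih α := by
  refine Finsupp.lhom_ext fun f b => ?_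
  rw [LinearMap.comp_apply, LinearMap.comp_apply, creat_single, annih_single, map_smul,
    map_smul, annih_single, creat_single, smul_smul, smul_smul,
    Finsupp.add_single_tsub_single_of_ne h, mul_comm]
  simp [Finsupp.single_eq_of_ne h, Finsupp.single_eq_of_ne h.symm]

/-- Canonical commutation relation: `a_α a_β† − a_β† a_α = δ_{αβ} id`. -/
theorem boson_ccr {I : Type*} [DecidableEq I] (α β : I) :
    annih α ∘ₗ creat β - creat β ∘ₗ annih α =
      if α = β then LinearMap.id else 0 := by
  split_ifs with h
  · subst h
    refine Finsupp.lhom_ext fun f b => ?_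
    rw [LinearMap.sub_apply, LinearMap.comp_apply, LinearMap.comp_apply, annih_creat_single,
      creat_annih_single, ← sub_smul, add_sub_cancel_left, one_smul, LinearMap.id_apply]
  · rw [annih_comp_creat_of_ne h]
    exact sub_self (creat β ∘ₗ annih α)
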